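/- arXiv:1201.3194 — 3 statements merged into one kernel-verified Lean document; each statement's English description precedes it below -/
import Mathlib

section
/- Let a₁, …, aₙ be pairwise distinct letters of an alphabet Σ, let B = {a₁^{k₁} ⋯ aₙ^{kₙ} : k₁, …, kₙ ∈ ℕ}, let d ≥ 1, and let L be a language over Σ × {1, …, d} such that for every w ∈ L and every i ∈ {1, …, d}, the index-i projection π_i(w) belongs to B. Then for all words u₁, …, u_d ∈ B, the indexed shuffle (u₁ ⋈ 1) ⧢ ⋯ ⧢ (u_d ⋈ d) intersects L non-trivially if and only if there exists w ∈ L such that for every letter a ∈ {a₁,…,aₙ} and every i ∈ {1,…,d}, the number of occurrences of the letter (a, i) in w equals the number of occurrences of a in u_i. -/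
/-- `IsShuffle u v w` holds iff `w` is an interleaving of `u` and `v`,
i.e. `w ∈ u ⧢ v`. -/
inductive IsShuffle {α : Type*} : List α → List α → List α → Prop
  | nil : IsShuffle [] [] []
  | left {u v w : List α} (a : α) : IsShuffle u v w → IsShuffle (a :: u) v (a :: w)
  | right {u v w : List α} (a : α) : IsShuffle u v w → IsShuffle u (a :: v) (a :: w)

/-- Shuffle of two languages. -/
def langShuffle {α : Type*} (L₁ L₂ : Set (List α)) : Set (List α) :=
  {w | ∃ u ∈ L₁, ∃ v ∈ L₂, IsShuffle u v w}

/-- Iterated shuffle `u₁ ⧢ u₂ ⧢ ⋯ ⧢ u_d` of a list of words. -/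
def iterShuffle {α : Type*} : List (List α) → Set (List α)
  | [] => {[]}
  | u :: us => langShuffle {u} (iterShuffle us)

/-- The index-`i` projection of a word over `α × Fin d`: keep, in order, the
first components of the letters whose second component is `i`. -/
def proj {α : Type*} {d : ℕ} (w : List (α × Fin d)) (i : Fin d) : List α :=
  (w.filter fun p => p.2 = i).map Prod.fst

/-- The letter-bounded language `a₁^* a₂^* ⋯ aₙ^*` determined by the letters
`a 0, …, a (n-1)`. -/
def letterBounded {α : Type*} {n : ℕ} (a : Fin n → α) : Set (List α) :=
  {w | ∃ k : Fin n → ℕ, w = (List.ofFn fun j => List.replicate (k j) (a j)).flatten}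

/-!
A word over `α × Fin d` lies in the indexed shuffle of the `u i ⋈ i` exactly when its index-`i`
projection is `u i` for every `i`: shuffling only interleaves, and projecting to one index
undoes the interleaving. Counting `(a j, i)` in `w` is counting `a j` in `proj w i`, and a word of
`a₁^* ⋯ aₙ^*` with distinct `aⱼ` is determined by its letter counts; since every projection of a
word of `L` lies in `a₁^* ⋯ aₙ^*`, matching counts force `proj w i = u i`.
-/

namespace IsShuffle

variable {α β : Type*} {u v w : List α}

lemma eq_of_nil_left (h : IsShuffle [] v w) : w = v := by
  generalize hu : ([] : List α) = u at h
  induction h with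
  | nil => rfl
  | left _ _ _ => simp at hu
  | right a _ ih => rw [ih hu]

lemma eq_of_nil_right (h : IsShuffle u [] w) : w = u := by
  generalize hv : ([] : List α) = v at h
  induction h with
  | nil => rfl
  | left a _ ih => rw [ih hv]
  | right _ _ _ => simp at hv

lemma filter (p : α → Bool) (h : IsShuffle u v w) :
    IsShuffle (u.filter p) (v.filter p) (w.filter p) := by
  induction h with
  | nil => exact .nil
  | left a _ ih => cases hp : p a <;> simp [hp, ih, IsShuffle.left]
  | right a _ ih => cases hp : p a <;> simp [hp, ih, IsShuffle.right]

lemma map (f : α → β) (h : IsShuffle u v w) : IsShuffle (u.map f) (v.map f) (w.map f) := by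
  induction h with
  | nil => exact .nil
  | left a _ ih => exact .left (f a) ih
  | right a _ ih => exact .right (f a) ih

end IsShuffle

lemma isShuffle_filter_filter_not {α : Type*} (p : α → Bool) (w : List α) :
    IsShuffle (w.filter p) (w.filter fun x => !p x) w := by
  induction w with
  | nil => exact .nil
  | cons a w ih =>
    cases hp : p a <;> simp [hp, ih, IsShuffle.left, IsShuffle.right]

section Proj

variable {α : Type*} {d : ℕ}

lemma IsShuffle.proj {u v w : List (α × Fin d)} (h : IsShuffle u v w) (i : Fin d) :
    IsShuffle (proj u i) (proj v i) (proj w i) :=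
  (h.filter _).map _

lemma proj_eq_nil_iff {w : List (α × Fin d)} {i : Fin d} :
    proj w i = [] ↔ ∀ p ∈ w, p.2 ≠ i := by
  simp [proj]

lemma proj_map_pair (x : List α) (i j : Fin d) :
    proj (x.map fun y => (y, i)) j = if i = j then x else [] := by
  split_ifs with h
  · simp [proj, h, List.filter_map, Function.comp_def]
  · simp [proj, h]

lemma map_pair_proj (w : List (α × Fin d)) (i : Fin d) :
    (proj w i).map (fun y => (y, i)) = w.filter fun p => p.2 = i := by
  rw [proj, List.map_map]
  conv_rhs => rw [← List.map_id (w.filter _)]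
  refine List.map_congr_left fun p hp => ?_
  simp only [List.mem_filter, decide_eq_true_eq] at hp
  simp [← hp.2]

lemma proj_filter_ne (w : List (α × Fin d)) (i j : Fin d) :
    proj (w.filter fun p => !decide (p.2 = i)) j = if j = i then [] else proj w j := by
  split_ifs with h
  · simp [proj_eq_nil_iff, h]
  · simp only [proj, List.filter_filter]
    congr 2
    funext p
    by_cases hp : p.2 = j <;> simp [hp, h]

lemma count_proj [DecidableEq α] (w : List (α × Fin d)) (i : Fin d) (x : α) :
    (proj w i).count x = w.count (x, i) := by
  induction w with
  | nil => rfl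
  | cons p w ih =>
    obtain ⟨y, j⟩ := p
    by_cases hj : j = i <;> by_cases hy : y = x <;> simp_all [proj, Prod.ext_iff]

end Proj

lemma mem_iterShuffle_iff {α : Type*} {d : ℕ} (u : Fin d → List α) {l : List (Fin d)}
    (hl : l.Nodup) (w : List (α × Fin d)) :
    w ∈ iterShuffle (l.map fun i => (u i).map fun x => (x, i)) ↔
      ∀ j, proj w j = if j ∈ l then u j else [] := by
  induction l generalizing w with
  | nil =>
    simp only [List.map_nil, iterShuffle, Set.mem_singleton_iff, List.not_mem_nil,
      if_false, proj_eq_nil_iff]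
    constructor
    · rintro rfl; simp
    · intro h
      cases w with
      | nil => rfl
      | cons p w => exact absurd rfl (h p.2 p List.mem_cons_self)
  | cons i l ih =>
    obtain ⟨hi, hl⟩ := List.nodup_cons.1 hl
    simp only [List.map_cons, iterShuffle, langShuffle, Set.mem_singleton_iff, exists_eq_left,
      Set.mem_ofPred_eq, ih hl, List.mem_cons]
    constructor
    · rintro ⟨v, hv, hsh⟩ j
      by_cases hj : j = i
      · subst hj
        have hsh := hsh.proj j
        rw [proj_map_pair, if_pos rfl, hv j, if_neg hi] at hsh
        simp [hsh.eq_of_nil_right]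
      · have hsh := hsh.proj j
        rw [proj_map_pair, if_neg (Ne.symm hj)] at hsh
        simp [hsh.eq_of_nil_left, hv j, hj]
    · intro hw
      refine ⟨w.filter fun p => !decide (p.2 = i), fun j => ?_, ?_⟩
      · rw [proj_filter_ne, hw j]
        by_cases hj : j = i <;> simp [hj, hi]
      · have hwi : w.filter (fun p => p.2 = i) = (u i).map fun x => (x, i) := by
          rw [← map_pair_proj, hw i]
          simp
        simpa [hwi] using isShuffle_filter_filter_not (fun p => decide (p.2 = i)) w

section LetterBounded

variable {α : Type*} [DecidableEq α] {n : ℕ} {a : Fin n → α}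

lemma count_flatten_replicate (ha : Function.Injective a) (k : Fin n → ℕ) (j : Fin n) :
    ((List.ofFn fun j => List.replicate (k j) (a j)).flatten).count (a j) = k j := by
  rw [List.count_flatten, List.map_ofFn, List.sum_ofFn]
  simp [List.count_replicate, ha.eq_iff]

lemma eq_of_count_eq_of_mem_letterBounded (ha : Function.Injective a) {v v' : List α}
    (hv : v ∈ letterBounded a) (hv' : v' ∈ letterBounded a)
    (h : ∀ j, v.count (a j) = v'.count (a j)) : v = v' := by
  obtain ⟨k, rfl⟩ := hv
  obtain ⟨k', rfl⟩ := hv'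
  obtain rfl : k = k' := funext fun j => by simpa only [count_flatten_replicate ha] using h j
  rfl

end LetterBounded

theorem iterShuffle_inter_iff_counts_general {α : Type*} [DecidableEq α] {n d : ℕ}
    (a : Fin n → α) (ha : Function.Injective a)
    (L : Set (List (α × Fin d)))
    (hL : ∀ w ∈ L, ∀ i : Fin d, proj w i ∈ letterBounded a)
    (u : Fin d → List α) (hu : ∀ i, u i ∈ letterBounded a) :
    (∃ w ∈ iterShuffle ((List.finRange d).map fun i =>
        (u i).map fun x => (x, i)), w ∈ L) ↔
    (∃ w ∈ L, ∀ (j : Fin n) (i : Fin d),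
        w.count (a j, i) = (u i).count (a j)) := by
  have hmem : ∀ w, w ∈ iterShuffle ((List.finRange d).map fun i =>
      (u i).map fun x => (x, i)) ↔ ∀ i, proj w i = u i := by
    simpa using mem_iterShuffle_iff u (List.nodup_finRange d)
  simp only [hmem]
  constructor
  · rintro ⟨w, hw, hwL⟩
    exact ⟨w, hwL, fun j i => by rw [← count_proj, hw i]⟩
  · rintro ⟨w, hwL, hcount⟩
    refine ⟨w, fun i => ?_, hwL⟩
    exact eq_of_count_eq_of_mem_letterBounded ha (hL w hwL i) (hu i) fun j => by
      rw [count_proj, hcount]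

/-- Let `a₁, …, aₙ` be pairwise distinct letters, `B = a₁^* ⋯ aₙ^*`, and let
`L` be a language over `α × Fin d` all of whose words project into `B` on every
index.  Then for words `u₁, …, u_d ∈ B`, the indexed shuffle
`(u₁ ⋈ 1) ⧢ ⋯ ⧢ (u_d ⋈ d)` meets `L` iff some `w ∈ L` has, for every letter
`aⱼ` and index `i`, as many occurrences of `(aⱼ, i)` as `uᵢ` has of `aⱼ`. -/
theorem iterShuffle_inter_iff_counts {α : Type*} [DecidableEq α] {n d : ℕ}
    (hn : 1 ≤ n) (hd : 1 ≤ d) (a : Fin n → α) (ha : Function.Injective a)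
    (L : Set (List (α × Fin d)))
    (hL : ∀ w ∈ L, ∀ i : Fin d, proj w i ∈ letterBounded a)
    (u : Fin d → List α) (hu : ∀ i, u i ∈ letterBounded a) :
    (∃ w ∈ iterShuffle ((List.finRange d).map fun i =>
        (u i).map fun x => (x, i)), w ∈ L) ↔
    (∃ w ∈ L, ∀ (j : Fin n) (i : Fin d),
        w.count (a j, i) = (u i).count (a j)) :=
  iterShuffle_inter_iff_counts_general a ha L hL u hu
end

section
/- Let v₀ and v₁ be words over an alphabet Σ with v₀·v₁ ≠ v₁·v₀. Then the map h from binary strings to words over Σ defined by h(b₁ b₂ ⋯ bₘ) = v_{b₁} · v_{b₂} ⋯ v_{bₘ} (mapping the empty string to the empty word) is injective: for all lists s, t of bits, if the concatenation of the words v_{s_i} equals the concatenation of the words v_{t_i}, then s = t. -/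
/-!
Two words commute as soon as they satisfy a nontrivial relation. Strip a common prefix of the two
bit strings, so that the relation reads `x·X = y·Y` with `X, Y` products of `x` and `y`. If
`|x| ≤ |y|` then `y = x·z`, and reading every product of `x` and `x·z` as a product of `z` and `x`
turns the relation, after cancelling `x`, into one of the same shape for the shorter pair `z, x`.
By induction `z·x = x·z`, hence `x·y = y·x`.
-/

namespace BitEncoding

variable {α : Type*}

def encode (x y : List α) (s : List Bool) : List α :=
  (s.map fun b => bif b then y else x).flatten

@[simp] lemma encode_nil (x y : List α) : encode x y [] = [] := rfl

@[simp] lemma encode_cons (x y : List α) (b : Bool) (s : List Bool) :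
    encode x y (b :: s) = (bif b then y else x) ++ encode x y s := by
  simp [encode]

lemma encode_map_not (x y : List α) (s : List Bool) : encode y x (s.map not) = encode x y s := by
  induction s with
  | nil => rfl
  | cons b s ih => cases b <;> simp [ih]

def expand (s : List Bool) : List Bool :=
  s.flatMap fun b => bif b then [true, false] else [true]

lemma encode_expand (x z : List α) (s : List Bool) :
    encode z x (expand s) = encode x (x ++ z) s := by
  induction s with
  | nil => rfl
  | cons b s ih => cases b <;> simp_all [expand]

lemma exists_encode_self_append_eq (x z : List α) {s : List Bool} (hs : s ≠ []) :
    ∃ r, encode x (x ++ z) s = x ++ encode z x r := by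
  obtain ⟨b, s, rfl⟩ := List.exists_cons_of_ne_nil hs
  refine ⟨(bif b then [false] else []) ++ expand s, ?_⟩
  cases b <;> simp [← encode_expand]

theorem append_comm_of_append_encode_eq {x y : List α} {s t : List Bool}
    (h : x ++ encode x y s = y ++ encode x y t) : x ++ y = y ++ x := by
  induction hn : x.length + y.length using Nat.strong_induction_on generalizing x y s t with
  | _ n ih =>
  wlog hle : x.length ≤ y.length generalizing x y s t
  · rw [← encode_map_not x y s, ← encode_map_not x y t] at h
    exact (this h.symm (by omega) (by omega)).symm
  rcases eq_or_ne x [] with rfl | hx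
  · simp
  obtain ⟨z, rfl⟩ : x <+: y := List.prefix_of_prefix_length_le ⟨_, rfl⟩ ⟨_, h.symm⟩ hle
  rcases eq_or_ne z [] with rfl | hz
  · simp
  have h' : encode x (x ++ z) s = z ++ encode x (x ++ z) t := by
    simpa only [List.append_assoc, List.append_cancel_left_eq] using h
  have hs : s ≠ [] := by
    rintro rfl
    exact hz (List.append_eq_nil_iff.mp h'.symm).1
  obtain ⟨r, hr⟩ := exists_encode_self_append_eq x z hs
  rw [hr, ← encode_expand] at h'
  have hzx : z ++ x = x ++ z := by
    refine ih _ ?_ h'.symm rfl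
    have := List.length_pos_iff.mpr hx
    simp only [List.length_append] at hn
    omega
  rw [List.append_assoc, hzx]

theorem append_comm_of_encode_eq {x y : List α} {s t : List Bool}
    (h : encode x y s = encode x y t) (hst : s ≠ t) : x ++ y = y ++ x := by
  rcases eq_or_ne x [] with rfl | hx
  · simp
  rcases eq_or_ne y [] with rfl | hy
  · simp
  induction s generalizing t with
  | nil =>
    obtain ⟨c, t, rfl⟩ := List.exists_cons_of_ne_nil hst.symm
    cases c <;> simp_all
  | cons b s ih =>
    obtain _ | ⟨c, t⟩ := t
    · cases b <;> simp_all
    obtain rfl | hbc := eq_or_ne b c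
    · exact ih (by simpa using h) (by simpa using hst)
    · cases b <;> cases c <;> simp only [encode_cons, cond_true, cond_false] at h
      · exact absurd rfl hbc
      · exact append_comm_of_append_encode_eq h
      · exact append_comm_of_append_encode_eq h.symm
      · exact absurd rfl hbc

end BitEncoding

/-- If `v₀·v₁ ≠ v₁·v₀`, then the map sending a binary string `b₁b₂⋯bₘ` to the
word `v_{b₁}·v_{b₂}⋯v_{bₘ}` is injective. -/
theorem noncommuting_encoding_injective {α : Type*} (v₀ v₁ : List α)
    (h : v₀ ++ v₁ ≠ v₁ ++ v₀) :
    Function.Injective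
      (fun s : List Bool => (s.map fun b => bif b then v₁ else v₀).flatten) :=
  fun _ _ hst => by_contra fun hne => h (BitEncoding.append_comm_of_encode_eq hst hne)
end

section
/- Over the three-letter alphabet {p, m, z} (representing counter increment, decrement, and zero-test), the language L consisting of all words w such that (i) every prefix of w contains at least as many occurrences of p as of m, and (ii) every prefix of w whose last letter is z contains exactly as many occurrences of p as of m, is a context-free language. -/
/-!
The language is the set of words accepted by a one-counter machine (`run`) in which
`p = 0` increments the counter, `m = 1` decrements it and `z = 2` checks that it is zero.
It is generated by the grammar
  `S → ε | z S | p N | p E m S`,  `N → ε | p N | p E m N`,  `E → ε | p E m E`,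
where `E` derives the `z`-free words taking the counter from `0` back to `0` (Dyck words) and
`N` the `z`-free accepted words. These three languages solve the equations of the grammar
(`mem_lang_iff`): after a leading `p`, either the counter never falls back to its value before
the `p`, or the word splits as `p e m x` at the first such return, with `e` a Dyck word.
Soundness follows since each rule maps words of these languages into the language of its
left-hand side, completeness by induction on the length of the word.
-/

namespace ContextFreeGrammar

variable {T N : Type*}

def symbolLanguage (I : N → Language T) : Symbol T N → Language T
  | .terminal a => {[a]}
  | .nonterminal n => I n

def formLanguage (I : N → Language T) (u : List (Symbol T N)) : Language T :=
  (u.map (symbolLanguage I)).prod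

lemma formLanguage_append (I : N → Language T) (u v : List (Symbol T N)) :
    formLanguage I (u ++ v) = formLanguage I u * formLanguage I v := by
  simp [formLanguage]

lemma mem_formLanguage_map_terminal (I : N → Language T) (w : List T) :
    w ∈ formLanguage I (w.map Symbol.terminal) := by
  induction w with
  | nil => exact Language.nil_mem_one
  | cons a w ih => exact Language.append_mem_mul (Set.mem_singleton [a]) ih

variable {g : ContextFreeGrammar T} {I : g.NT → Language T}

lemma Produces.formLanguage_le (hI : ∀ r ∈ g.rules, formLanguage I r.output ≤ I r.input)
    {u v : List (Symbol T g.NT)} (huv : g.Produces u v) :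
    formLanguage I v ≤ formLanguage I u := by
  obtain ⟨r, hr, hrw⟩ := huv
  obtain ⟨p, q, rfl, rfl⟩ := hrw.exists_parts
  simp only [formLanguage_append]
  gcongr
  simpa [formLanguage, symbolLanguage] using hI r hr

lemma Derives.formLanguage_le (hI : ∀ r ∈ g.rules, formLanguage I r.output ≤ I r.input)
    {u v : List (Symbol T g.NT)} (huv : g.Derives u v) :
    formLanguage I v ≤ formLanguage I u := by
  induction huv with
  | refl => exact le_rfl
  | tail _ h ih => exact (h.formLanguage_le hI).trans ih

theorem language_le_of_forall_output_le
    (hI : ∀ r ∈ g.rules, formLanguage I r.output ≤ I r.input) :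
    g.language ≤ I g.initial := fun w hw => by
  simpa [formLanguage, symbolLanguage] using
    hw.formLanguage_le hI (mem_formLanguage_map_terminal I w)

lemma Derives.append {u u' v v' : List (Symbol T g.NT)} (hu : g.Derives u u')
    (hv : g.Derives v v') : g.Derives (u ++ v) (u' ++ v') :=
  (hu.append_right v).trans (hv.append_left u')

end ContextFreeGrammar

namespace CounterLanguage

def step : ℕ → Fin 3 → Option ℕ
  | c, 0 => some (c + 1)
  | c + 1, 1 => some c
  | 0, 2 => some 0
  | _, _ => none

def run (c : ℕ) (w : List (Fin 3)) : Option ℕ :=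
  w.foldlM step c

@[simp] lemma run_nil (c : ℕ) : run c [] = some c := rfl

lemma run_cons (c : ℕ) (a : Fin 3) (w : List (Fin 3)) :
    run c (a :: w) = (step c a).bind (run · w) := rfl

lemma run_append (c : ℕ) (u v : List (Fin 3)) : run c (u ++ v) = (run c u).bind (run · v) :=
  List.foldlM_append

lemma run_concat (c : ℕ) (w : List (Fin 3)) (a : Fin 3) :
    run c (w ++ [a]) = (run c w).bind (step · a) := by
  simp [run_append, run_cons]

lemma count_add_of_run_eq_some {c k : ℕ} {w : List (Fin 3)} (h : run c w = some k) :
    k + w.count 1 = c + w.count 0 := by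
  induction w generalizing c with
  | nil => simpa using h.symm
  | cons a w ih =>
    fin_cases a <;> rcases c with _ | c <;> simp [run_cons, step] at h <;> simp <;> grind

lemma run_ne_none_iff (w : List (Fin 3)) :
    run 0 w ≠ none ↔
      (∀ u : List (Fin 3), u <+: w → u.count 1 ≤ u.count 0) ∧
      (∀ u : List (Fin 3), u <+: w → u.getLast? = some 2 → u.count 0 = u.count 1) := by
  rw [← forall₂_and]
  induction w using List.reverseRecOn with
  | nil => simp [List.prefix_nil]
  | append_singleton w a ih =>
    simp only [List.prefix_concat_iff, forall_eq_or_imp, ← ih, run_concat]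
    rcases hw : run 0 w with _ | k
    · simp
    · have hk := count_add_of_run_eq_some hw
      fin_cases a <;> rcases k with _ | k <;> simp [step, List.count_append] <;> omega

lemma run_add_of_two_notMem {c k : ℕ} {w : List (Fin 3)} (hw : 2 ∉ w) (h : run c w = some k)
    (j : ℕ) : run (c + j) w = some (k + j) := by
  induction w generalizing c with
  | nil => simp_all
  | cons a w ih =>
    obtain ⟨ha, hw'⟩ := not_or.mp (List.mem_cons.not.mp hw)
    match a, c, h with
    | 0, c, h =>
      rw [run_cons, step, Option.bind_some, Nat.add_right_comm]
      exact ih hw' h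
    | 1, c + 1, h =>
      rw [Nat.add_right_comm]
      exact ih hw' h
    | 2, _, _ => exact absurd rfl ha

inductive NT
  | start
  | dyckPrefix
  | dyck
  deriving DecidableEq

def lang : NT → Language (Fin 3)
  | .start => {w | run 0 w ≠ none}
  | .dyckPrefix => {w | 2 ∉ w ∧ run 0 w ≠ none}
  | .dyck => {w | 2 ∉ w ∧ run 0 w = some 0}

variable {w : List (Fin 3)}

@[simp] lemma mem_lang_start : w ∈ lang .start ↔ run 0 w ≠ none := Iff.rfl
@[simp] lemma mem_lang_dyckPrefix : w ∈ lang .dyckPrefix ↔ 2 ∉ w ∧ run 0 w ≠ none := Iff.rfl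
@[simp] lemma mem_lang_dyck : w ∈ lang .dyck ↔ 2 ∉ w ∧ run 0 w = some 0 := Iff.rfl

lemma run_ne_none_of_mem_lang {X : NT} (hw : w ∈ lang X) : run 0 w ≠ none := by
  cases X
  · exact hw
  · exact hw.2
  · exact hw.2 ▸ Option.some_ne_none 0

lemma run_wrap_dyck {e : List (Fin 3)} (he : e ∈ lang .dyck) (x : List (Fin 3)) :
    run 0 (0 :: (e ++ 1 :: x)) = run 0 x := by
  have : run 1 e = some 1 := run_add_of_two_notMem he.1 he.2 1
  simp [run_cons, step, run_append, this]

lemma wrap_dyck_mem_lang_iff {e : List (Fin 3)} (he : e ∈ lang .dyck) {X : NT}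
    {x : List (Fin 3)} : 0 :: (e ++ 1 :: x) ∈ lang X ↔ x ∈ lang X := by
  have := he.1
  cases X <;> simp [run_wrap_dyck he, this]

/-- Started at `1`, the counter either never reaches `0` or first does so after a Dyck prefix
`e` followed by an `m`. -/
lemma mem_dyckPrefix_or_eq_dyck_append {v : List (Fin 3)} (hv : run 1 v ≠ none) :
    v ∈ lang .dyckPrefix ∨ ∃ e r, v = e ++ 1 :: r ∧ e ∈ lang .dyck := by
  induction v using List.reverseRecOn with
  | nil => simp
  | append_singleton v a ih =>
    rw [run_concat] at hv
    rcases ih (fun h => hv (by simp [h])) with ⟨hv2, hv0⟩ | ⟨e, r, rfl, he⟩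
    · obtain ⟨k, hk⟩ := Option.ne_none_iff_exists'.mp hv0
      have hk1 : run 1 v = some (k + 1) := by simpa using run_add_of_two_notMem hv2 hk 1
      rw [hk1, Option.bind_some] at hv
      match a, k, hk, hv with
      | 0, k, hk, _ => exact .inl ⟨by simpa using hv2, by simp [run_concat, hk, step]⟩
      | 1, 0, hk, _ => exact .inr ⟨v, [], rfl, hv2, hk⟩
      | 1, k + 1, hk, _ => exact .inl ⟨by simpa using hv2, by simp [run_concat, hk, step]⟩
      | 2, _, _, hv => simp [step] at hv
    · exact .inr ⟨e, r ++ [a], by simp, he⟩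

lemma exists_run_zero_cons_eq_succ {v : List (Fin 3)} (hv : v ∈ lang .dyckPrefix) :
    ∃ k, run 0 (0 :: v) = some (k + 1) :=
  let ⟨k, hk⟩ := Option.ne_none_iff_exists'.mp hv.2
  ⟨k, run_add_of_two_notMem hv.1 hk 1⟩

lemma mem_lang_iff {X : NT} : w ∈ lang X ↔ w = [] ∨
    (X = .start ∧ ∃ v, w = 2 :: v ∧ v ∈ lang .start) ∨
    (X ≠ .dyck ∧ ∃ v, w = 0 :: v ∧ v ∈ lang .dyckPrefix) ∨
    ∃ e r, w = 0 :: (e ++ 1 :: r) ∧ e ∈ lang .dyck ∧ r ∈ lang X := by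
  constructor
  · intro hw
    rcases w with _ | ⟨a, v⟩
    · exact .inl rfl
    match a with
    | 0 =>
      rcases mem_dyckPrefix_or_eq_dyck_append (run_ne_none_of_mem_lang hw) with
        hv | ⟨e, r, rfl, he⟩
      · refine .inr (.inr (.inl ⟨?_, v, rfl, hv⟩))
        rintro rfl
        obtain ⟨k, hk⟩ := exists_run_zero_cons_eq_succ hv
        simp [hk] at hw
      · exact .inr (.inr (.inr ⟨e, r, rfl, he, (wrap_dyck_mem_lang_iff he).mp hw⟩))
    | 1 => exact absurd (run_ne_none_of_mem_lang hw) (by simp [run_cons, step])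
    | 2 =>
      cases X
      · exact .inr (.inl ⟨rfl, v, rfl, by simpa [run_cons, step] using hw⟩)
      all_goals simp at hw
  · rintro (rfl | ⟨rfl, v, rfl, hv⟩ | ⟨hX, v, rfl, hv⟩ | ⟨e, r, rfl, he, hr⟩)
    · cases X <;> simp
    · simpa [run_cons, step] using hv
    · obtain ⟨k, hk⟩ := exists_run_zero_cons_eq_succ hv
      cases X <;> simp_all
    · exact (wrap_dyck_mem_lang_iff he).mpr hr

def rules : Finset (ContextFreeRule (Fin 3) NT) :=
  {⟨.start, []⟩, ⟨.dyckPrefix, []⟩, ⟨.dyck, []⟩,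
   ⟨.start, [.terminal 2, .nonterminal .start]⟩,
   ⟨.start, [.terminal 0, .nonterminal .dyckPrefix]⟩,
   ⟨.dyckPrefix, [.terminal 0, .nonterminal .dyckPrefix]⟩,
   ⟨.start, [.terminal 0, .nonterminal .dyck, .terminal 1, .nonterminal .start]⟩,
   ⟨.dyckPrefix, [.terminal 0, .nonterminal .dyck, .terminal 1, .nonterminal .dyckPrefix]⟩,
   ⟨.dyck, [.terminal 0, .nonterminal .dyck, .terminal 1, .nonterminal .dyck]⟩}

abbrev grammar : ContextFreeGrammar (Fin 3) := ⟨NT, .start, rules⟩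

open ContextFreeGrammar

lemma formLanguage_output_le_lang_input :
    ∀ r ∈ rules, formLanguage lang r.output ≤ lang r.input := by
  intro r hr
  simp only [rules, Finset.mem_insert, Finset.mem_singleton] at hr
  rcases hr with rfl | rfl | rfl | rfl | rfl | rfl | rfl | rfl | rfl
  iterate 3 rintro w rfl; exact mem_lang_iff.mpr (.inl rfl)
  · rintro w ⟨_, rfl, _, ⟨v, hv, _, rfl, rfl⟩, rfl⟩
    exact mem_lang_iff.mpr (.inr (.inl ⟨rfl, v, by simp, hv⟩))
  iterate 2
    rintro w ⟨_, rfl, _, ⟨v, hv, _, rfl, rfl⟩, rfl⟩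
    exact mem_lang_iff.mpr (.inr (.inr (.inl ⟨nofun, v, by simp, hv⟩)))
  iterate 3
    rintro w ⟨_, rfl, _, ⟨e, he, _, ⟨_, rfl, _, ⟨x, hx, _, rfl, rfl⟩, rfl⟩, rfl⟩, rfl⟩
    exact mem_lang_iff.mpr (.inr (.inr (.inr ⟨e, x, by simp, he, hx⟩)))

lemma derives_of_mem_rules {X : NT} {u : List (Symbol (Fin 3) NT)} (hr : ⟨X, u⟩ ∈ rules)
    {w : List (Symbol (Fin 3) NT)} (h : grammar.Derives u w) :
    grammar.Derives [.nonterminal X] w :=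
  (Produces.single (g := grammar) ⟨⟨X, u⟩, hr, ContextFreeRule.Rewrites.input_output⟩).trans h

theorem derives_of_mem_lang {X : NT} {w : List (Fin 3)} (hw : w ∈ lang X) :
    grammar.Derives [.nonterminal X] (w.map .terminal) := by
  rcases mem_lang_iff.mp hw with rfl | ⟨rfl, v, rfl, hv⟩ | ⟨hX, v, rfl, hv⟩ | ⟨e, r, rfl, he, hr⟩
  · exact derives_of_mem_rules (by cases X <;> simp [rules]) (Derives.refl [])
  · exact derives_of_mem_rules (by simp [rules])
      ((Derives.refl [.terminal 2]).append (derives_of_mem_lang hv))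
  · exact derives_of_mem_rules (by cases X <;> simp_all [rules])
      ((Derives.refl [.terminal 0]).append (derives_of_mem_lang hv))
  · have := (Derives.refl [.terminal 0]).append ((derives_of_mem_lang he).append
      ((Derives.refl [.terminal 1]).append (derives_of_mem_lang hr)))
    simpa using derives_of_mem_rules (by cases X <;> simp [rules]) this
termination_by w.length
decreasing_by all_goals subst_vars; simp only [List.length_cons, List.length_append]; omega

end CounterLanguage

/-- Over the alphabet `Fin 3` (where `0 = p` is increment, `1 = m` is
decrement and `2 = z` is zero-test), the language of all words such that
(i) every prefix has at least as many `p`'s as `m`'s, and (ii) every prefix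
ending in `z` has exactly as many `p`'s as `m`'s, is context-free. -/
theorem counter_language_isContextFree :
    Language.IsContextFree
      {w : List (Fin 3) |
        (∀ u : List (Fin 3), u <+: w → u.count 1 ≤ u.count 0) ∧
        (∀ u : List (Fin 3), u <+: w → u.getLast? = some 2 →
          u.count 0 = u.count 1)} := by
  open CounterLanguage in
  have hlang : grammar.language = lang .start :=
    le_antisymm
      (ContextFreeGrammar.language_le_of_forall_output_le formLanguage_output_le_lang_input)
      fun _ hw => derives_of_mem_lang hw
  exact ⟨grammar, hlang.trans (Set.ext run_ne_none_iff)⟩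
end
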